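/- Let (K,R) be triangular with a twist F, and g a braided Lie algebra associated with (K,R). Then the K_F-module g (same underlying space, same action) with bracket [u,v]_F := [F̄ᵅ▷u, F̄_α▷v] is a braided Lie algebra associated with (K_F, R_F = F₂₁RF^{-1}): the twisted bracket is K_F-equivariant, R_F-antisymmetric, and satisfies the R_F-braided Jacobi identity. -/

import Mathlib

/-! STATEMENT 16: the twist of a braided Lie algebra associated with a triangular Hopf algebra is a braided Lie algebra over the twisted Hopf algebra. -/

noncomputable section
open TensorProduct

variable (𝕜 : Type*) [CommRing 𝕜]
variable (K : Type*) [Ring K] [HopfAlgebra 𝕜 K]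
/-- `Δ ⊗ id` as an algebra map `K ⊗ K → K ⊗ (K ⊗ K)`. -/
def comul12 : K ⊗[𝕜] K →ₐ[𝕜] K ⊗[𝕜] (K ⊗[𝕜] K) :=
  (Algebra.TensorProduct.assoc 𝕜 𝕜 𝕜 K K K).toAlgHom.comp
    (Algebra.TensorProduct.map (Bialgebra.comulAlgHom 𝕜 K) (AlgHom.id 𝕜 K))

/-- `id ⊗ Δ`. -/
def comul23 : K ⊗[𝕜] K →ₐ[𝕜] K ⊗[𝕜] (K ⊗[𝕜] K) :=
  Algebra.TensorProduct.map (AlgHom.id 𝕜 K) (Bialgebra.comulAlgHom 𝕜 K)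

/-- `x ⊗ y ↦ x ⊗ y ⊗ 1`. -/
def ins12 : K ⊗[𝕜] K →ₐ[𝕜] K ⊗[𝕜] (K ⊗[𝕜] K) :=
  Algebra.TensorProduct.map (AlgHom.id 𝕜 K) Algebra.TensorProduct.includeLeft

/-- `x ⊗ y ↦ 1 ⊗ x ⊗ y`. -/
def ins23 : K ⊗[𝕜] K →ₐ[𝕜] K ⊗[𝕜] (K ⊗[𝕜] K) :=
  Algebra.TensorProduct.includeRight

/-- `x ⊗ y ↦ x ⊗ 1 ⊗ y`. -/
def ins13 : K ⊗[𝕜] K →ₐ[𝕜] K ⊗[𝕜] (K ⊗[𝕜] K) :=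
  Algebra.TensorProduct.map (AlgHom.id 𝕜 K) Algebra.TensorProduct.includeRight

/-- Quasitriangular structure: `R` invertible with inverse `Ri`,
quasi-cocommutativity `τ(Δ k) R = R Δ k`, and the two hexagon relations. -/
structure QuasiTri (R Ri : K ⊗[𝕜] K) : Prop where
  mul_inv : R * Ri = 1
  inv_mul : Ri * R = 1
  quasi : ∀ k : K, (TensorProduct.comm 𝕜 K K) (Coalgebra.comul k) * R
      = R * (Coalgebra.comul k : K ⊗[𝕜] K)
  hex1 : comul12 𝕜 K R = ins13 𝕜 K R * ins23 𝕜 K R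
  hex2 : comul23 𝕜 K R = ins13 𝕜 K R * ins12 𝕜 K R
/-- `(ε ⊗ id)`. -/
def epsLlin : K ⊗[𝕜] K →ₗ[𝕜] K :=
  (TensorProduct.lid 𝕜 K).toLinearMap.comp
    (TensorProduct.map (Coalgebra.counit : K →ₗ[𝕜] 𝕜) LinearMap.id)

/-- `(id ⊗ ε)`. -/
def epsRlin : K ⊗[𝕜] K →ₗ[𝕜] K :=
  (TensorProduct.rid 𝕜 K).toLinearMap.comp
    (TensorProduct.map LinearMap.id (Coalgebra.counit : K →ₗ[𝕜] 𝕜))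

/-- A Drinfeld twist `F` (with inverse `Fi`) for the bialgebra `K`:
invertible, unital, and satisfying the cocycle condition
`(F ⊗ 1)(Δ ⊗ id)(F) = (1 ⊗ F)(id ⊗ Δ)(F)`. -/
structure IsTwist (F Fi : K ⊗[𝕜] K) : Prop where
  mul_inv : F * Fi = 1
  inv_mul : Fi * F = 1
  unitalL : epsLlin 𝕜 K F = 1
  unitalR : epsRlin 𝕜 K F = 1
  cocycle : ins12 𝕜 K F * comul12 𝕜 K F = ins23 𝕜 K F * comul23 𝕜 K F

/-- The twisted coproduct `Δ_F(k) = F Δ(k) F⁻¹`. -/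
def twistComul (F Fi : K ⊗[𝕜] K) : K →ₗ[𝕜] K ⊗[𝕜] K :=
  (LinearMap.mulLeft 𝕜 F).comp
    ((LinearMap.mulRight 𝕜 Fi).comp (Coalgebra.comul : K →ₗ[𝕜] K ⊗[𝕜] K))
/-- The twisted R-matrix `R_F = F₂₁ R F⁻¹`. -/
def twistR (F Fi R : K ⊗[𝕜] K) : K ⊗[𝕜] K :=
  (TensorProduct.comm 𝕜 K K) F * R * Fi
/-- Given an action `β` of `K` and a bilinear operation `μ` on `M`, the map
sending `t = Σ k₁ ⊗ k₂` and `a, b` to `Σ μ (k₁ ▷ a) (k₂ ▷ b)` (Sweedler-style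
combination). -/
def sweedlerOp {M : Type*} [AddCommGroup M] [Module 𝕜 M]
    (β : K →ₗ[𝕜] M →ₗ[𝕜] M) (μ : M →ₗ[𝕜] M →ₗ[𝕜] M) :
    K ⊗[𝕜] K →ₗ[𝕜] M →ₗ[𝕜] M →ₗ[𝕜] M :=
  TensorProduct.lift <| LinearMap.mk₂ 𝕜
    (fun k1 k2 => (μ.comp (β k1)).compl₂ (β k2))
    (fun k k' l => by ext a b; simp [LinearMap.compl₂_apply, map_add])
    (fun c k l => by ext a b; simp [LinearMap.compl₂_apply, map_smul])
    (fun k l l' => by ext a b; simp [LinearMap.compl₂_apply, map_add])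
    (fun c k l => by ext a b; simp [LinearMap.compl₂_apply, map_smul])

/-- A module-algebra action of the bialgebra `K` on the algebra `A`:
`act` is a representation of `K`, `k ▷ (ab) = (k₍₁₎ ▷ a)(k₍₂₎ ▷ b)` and
`k ▷ 1 = ε(k) 1`. -/
structure MAlgAction {A : Type*} [Ring A] [Algebra 𝕜 A]
    (act : K →ₗ[𝕜] A →ₗ[𝕜] A) : Prop where
  act_act : ∀ k l : K, act (k * l) = (act k).comp (act l)
  act_one : act 1 = LinearMap.id
  act_mul : ∀ (k : K) (a b : A),
    act k (a * b) = sweedlerOp 𝕜 K act (LinearMap.mul 𝕜 A) (Coalgebra.comul k) a b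
  act_unit : ∀ k : K, act k 1 = Coalgebra.counit (R := 𝕜) k • (1 : A)
variable {g : Type*} [AddCommGroup g] [Module 𝕜 g]

/-- `act` is a representation of `K` on `g`. -/
def IsRep (act : K →ₗ[𝕜] g →ₗ[𝕜] g) : Prop :=
  (∀ k l : K, act (k * l) = (act k).comp (act l)) ∧ act 1 = LinearMap.id

/-- `br` is a braided Lie bracket on the `K`-module `g` associated with the
triangular structure `R`: it is `K`-equivariant, braided antisymmetric and
satisfies the braided Jacobi identity. -/
def IsBraidedLie (act : K →ₗ[𝕜] g →ₗ[𝕜] g) (R : K ⊗[𝕜] K)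
    (br : g →ₗ[𝕜] g →ₗ[𝕜] g) : Prop :=
  (∀ (k : K) (u v : g),
    act k (br u v) = sweedlerOp 𝕜 K act br (Coalgebra.comul k) u v)
  ∧ (∀ u v : g,
    br u v = - sweedlerOp 𝕜 K act br ((TensorProduct.comm 𝕜 K K) R) v u)
  ∧ (∀ u v w : g,
    br u (br v w) = br (br u v) w
      + sweedlerOp 𝕜 K act (br.compl₂ (br.flip w))
          ((TensorProduct.comm 𝕜 K K) R) v u)

/-! Write `Φ_μ(T)(u, v) = Σ μ (T₁ ▷ u) (T₂ ▷ v)` for `T ∈ K ⊗ K`, so that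
`[u, v]_F = Φ_br(F̄)(u, v)` and, on a representation, `Φ_μ(S T) = Φ_{Φ_μ(S)}(T)`. Equivariance and braided antisymmetry of
`br`, stated for `T = 1 ⊗ 1`, extend to every weight `T`; the twisted versions then reduce to the
identities `F̄ Δ_F(k) = Δ(k) F̄` and `F̄ (R_F)₂₁ = (R F̄)₂₁`.

For the Jacobi identity, the two nested twisted brackets are trilinear expressions weighted by
`(id ⊗ Δ)(F̄) (1 ⊗ F̄)` and `(Δ ⊗ id)(F̄) (F̄ ⊗ 1)` in `K ⊗ K ⊗ K`, and these agree by the inverse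
cocycle identity. The braided Jacobi identity likewise extends to arbitrary weights, producing the
correction weight `R₂₁ ⊗ 1` times the weight with its first two legs swapped. Quasi-cocommutativity
moves `R₂₁ ⊗ 1` past `(Δ ⊗ id)(F̄)`, and `(R F̄)₂₁ = F̄ (R_F)₂₁` turns the result into the weight of
the twisted correction term. -/

section TripleTensor

variable {𝕜 K}

lemma tensorComm_mul (a b : K ⊗[𝕜] K) :
    TensorProduct.comm 𝕜 K K (a * b) = TensorProduct.comm 𝕜 K K a * TensorProduct.comm 𝕜 K K b :=
  map_mul (Algebra.TensorProduct.comm 𝕜 K K) a b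

@[simp]
lemma ins12_tmul (a b : K) : ins12 𝕜 K (a ⊗ₜ b) = a ⊗ₜ (b ⊗ₜ (1 : K)) := by
  simp [ins12]

@[simp]
lemma ins23_apply (s : K ⊗[𝕜] K) : ins23 𝕜 K s = (1 : K) ⊗ₜ s :=
  rfl

lemma comul23_tmul (x y : K) : comul23 𝕜 K (x ⊗ₜ y) = x ⊗ₜ Coalgebra.comul (R := 𝕜) y := by
  simp [comul23]

lemma comul12_tmul (x y : K) :
    comul12 𝕜 K (x ⊗ₜ y) = ins12 𝕜 K (Coalgebra.comul x) * ins23 𝕜 K ((1 : K) ⊗ₜ y) := by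
  suffices h : ∀ s : K ⊗[𝕜] K, Algebra.TensorProduct.assoc 𝕜 𝕜 𝕜 K K K (s ⊗ₜ y)
      = ins12 𝕜 K s * ins23 𝕜 K ((1 : K) ⊗ₜ y) by simp [comul12, h]
  intro s
  induction s using TensorProduct.induction_on with
  | zero => simp
  | tmul a b => simp [Algebra.TensorProduct.tmul_mul_tmul]
  | add s t hs ht => simp only [TensorProduct.add_tmul, map_add, hs, ht, add_mul]

lemma commute_ins23_one_tmul_ins12 (y : K) (s : K ⊗[𝕜] K) :
    Commute (ins23 𝕜 K ((1 : K) ⊗ₜ y)) (ins12 𝕜 K s) := by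
  induction s using TensorProduct.induction_on with
  | zero => simp
  | tmul a b => simp [Commute, SemiconjBy, Algebra.TensorProduct.tmul_mul_tmul]
  | add s t hs ht => simpa only [map_add] using hs.add_right ht

lemma leftComm_ins12 (s : K ⊗[𝕜] K) :
    Algebra.TensorProduct.leftComm 𝕜 K K K (ins12 𝕜 K s)
      = ins12 𝕜 K (TensorProduct.comm 𝕜 K K s) := by
  induction s using TensorProduct.induction_on with
  | zero => simp
  | tmul a b => simp
  | add s t hs ht => simp only [map_add, hs, ht]

lemma leftComm_ins23_one_tmul (y : K) :
    Algebra.TensorProduct.leftComm 𝕜 K K K (ins23 𝕜 K ((1 : K) ⊗ₜ y))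
      = ins23 𝕜 K ((1 : K) ⊗ₜ y) := by
  simp

end TripleTensor

section Twist

variable {𝕜 K} {F Fi R : K ⊗[𝕜] K}

lemma inv_mul_twistComul (hFi : Fi * F = 1) (k : K) :
    Fi * twistComul 𝕜 K F Fi k = Coalgebra.comul k * Fi := by
  simp only [twistComul, LinearMap.comp_apply, LinearMap.mulLeft_apply,
    LinearMap.mulRight_apply, ← mul_assoc, hFi, one_mul]

lemma inv_mul_comm_twistR (hFi : Fi * F = 1) :
    Fi * TensorProduct.comm 𝕜 K K (twistR 𝕜 K F Fi R) = TensorProduct.comm 𝕜 K K (R * Fi) := by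
  simp only [twistR, tensorComm_mul, TensorProduct.comm_comm, ← mul_assoc, hFi, one_mul]

lemma IsTwist.comul12_inv_mul_ins12_inv (hF : IsTwist 𝕜 K F Fi) :
    comul12 𝕜 K Fi * ins12 𝕜 K Fi = comul23 𝕜 K Fi * ins23 𝕜 K Fi := by
  have hleft : (comul12 𝕜 K Fi * ins12 𝕜 K Fi) * (ins12 𝕜 K F * comul12 𝕜 K F) = 1 := by
    rw [mul_assoc, ← mul_assoc (ins12 𝕜 K Fi), ← map_mul, hF.inv_mul, map_one, one_mul,
      ← map_mul, hF.inv_mul, map_one]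
  have hright : (ins23 𝕜 K F * comul23 𝕜 K F) * (comul23 𝕜 K Fi * ins23 𝕜 K Fi) = 1 := by
    rw [mul_assoc, ← mul_assoc (comul23 𝕜 K F), ← map_mul, hF.mul_inv, map_one, one_mul,
      ← map_mul, hF.mul_inv, map_one]
  exact left_inv_eq_right_inv (hF.cocycle ▸ hleft) hright

lemma ins12_comm_mul_leftComm_comul12
    (hq : ∀ k : K, TensorProduct.comm 𝕜 K K (Coalgebra.comul k) * R = R * Coalgebra.comul k)
    (T : K ⊗[𝕜] K) :
    ins12 𝕜 K (TensorProduct.comm 𝕜 K K R)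
        * Algebra.TensorProduct.leftComm 𝕜 K K K (comul12 𝕜 K T)
      = comul12 𝕜 K T * ins12 𝕜 K (TensorProduct.comm 𝕜 K K R) := by
  induction T using TensorProduct.induction_on with
  | zero => simp
  | add S T hS hT => simp only [map_add, mul_add, add_mul, hS, hT]
  | tmul x y =>
    have hx : TensorProduct.comm 𝕜 K K R * TensorProduct.comm 𝕜 K K (Coalgebra.comul x)
        = Coalgebra.comul x * TensorProduct.comm 𝕜 K K R := by
      rw [← tensorComm_mul, ← hq x, tensorComm_mul, TensorProduct.comm_comm]
    rw [comul12_tmul, map_mul, leftComm_ins12, leftComm_ins23_one_tmul, ← mul_assoc, ← map_mul,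
      hx, map_mul, mul_assoc, ← (commute_ins23_one_tmul_ins12 y _).eq, mul_assoc]

lemma ins12_comm_mul_leftComm_comul12_inv_mul_ins12_inv
    (hq : ∀ k : K, TensorProduct.comm 𝕜 K K (Coalgebra.comul k) * R = R * Coalgebra.comul k)
    (hFi : Fi * F = 1) :
    ins12 𝕜 K (TensorProduct.comm 𝕜 K K R)
        * Algebra.TensorProduct.leftComm 𝕜 K K K (comul12 𝕜 K Fi * ins12 𝕜 K Fi)
      = comul12 𝕜 K Fi * ins12 𝕜 K Fi
        * ins12 𝕜 K (TensorProduct.comm 𝕜 K K (twistR 𝕜 K F Fi R)) := by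
  rw [map_mul, leftComm_ins12, ← mul_assoc, ins12_comm_mul_leftComm_comul12 hq, mul_assoc,
    mul_assoc, ← map_mul (ins12 𝕜 K), ← map_mul (ins12 𝕜 K), inv_mul_comm_twistR hFi,
    tensorComm_mul]

end Twist

section SweedlerOperators

variable {𝕜 K} (act : K →ₗ[𝕜] g →ₗ[𝕜] g)

@[simp]
lemma sweedlerOp_tmul (μ : g →ₗ[𝕜] g →ₗ[𝕜] g) (k l : K) (u v : g) :
    sweedlerOp 𝕜 K act μ (k ⊗ₜ l) u v = μ (act k u) (act l v) := by
  simp [sweedlerOp]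

lemma sweedlerOp_add_left (μ μ' : g →ₗ[𝕜] g →ₗ[𝕜] g) :
    sweedlerOp 𝕜 K act (μ + μ') = sweedlerOp 𝕜 K act μ + sweedlerOp 𝕜 K act μ' := by
  ext k l u v
  simp

lemma sweedlerOp_smul_left (c : 𝕜) (μ : g →ₗ[𝕜] g →ₗ[𝕜] g) :
    sweedlerOp 𝕜 K act (c • μ) = c • sweedlerOp 𝕜 K act μ := by
  ext k l u v
  simp

def sweedlerOpₗ : (g →ₗ[𝕜] g →ₗ[𝕜] g) →ₗ[𝕜] K ⊗[𝕜] K →ₗ[𝕜] g →ₗ[𝕜] g →ₗ[𝕜] g where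
  toFun := sweedlerOp 𝕜 K act
  map_add' := sweedlerOp_add_left act
  map_smul' := sweedlerOp_smul_left act

def sweedlerOp₃ (ν : g →ₗ[𝕜] g →ₗ[𝕜] g →ₗ[𝕜] g) :
    K ⊗[𝕜] (K ⊗[𝕜] K) →ₗ[𝕜] g →ₗ[𝕜] g →ₗ[𝕜] g →ₗ[𝕜] g :=
  TensorProduct.lift <| LinearMap.lflip.toLinearMap ∘ₗ LinearMap.llcomp 𝕜 g _ _ (sweedlerOpₗ act)
    ∘ₗ LinearMap.llcomp 𝕜 g g _ ν ∘ₗ act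

lemma sweedlerOp₃_tmul_apply (ν : g →ₗ[𝕜] g →ₗ[𝕜] g →ₗ[𝕜] g) (x : K) (s : K ⊗[𝕜] K)
    (u v w : g) :
    sweedlerOp₃ act ν (x ⊗ₜ s) u v w = sweedlerOp 𝕜 K act (ν (act x u)) s v w :=
  rfl

@[simp]
lemma sweedlerOp₃_tmul (ν : g →ₗ[𝕜] g →ₗ[𝕜] g →ₗ[𝕜] g) (x y z : K) (u v w : g) :
    sweedlerOp₃ act ν (x ⊗ₜ (y ⊗ₜ z)) u v w = ν (act x u) (act y v) (act z w) := by
  simp [sweedlerOp₃_tmul_apply]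

def nestedBracketRight (br : g →ₗ[𝕜] g →ₗ[𝕜] g) : g →ₗ[𝕜] g →ₗ[𝕜] g →ₗ[𝕜] g :=
  ((LinearMap.llcomp 𝕜 g g g).comp br).compl₂ br

def nestedBracketLeft (br : g →ₗ[𝕜] g →ₗ[𝕜] g) : g →ₗ[𝕜] g →ₗ[𝕜] g →ₗ[𝕜] g :=
  br.compr₂ br

@[simp]
lemma nestedBracketRight_apply (br : g →ₗ[𝕜] g →ₗ[𝕜] g) (u v w : g) :
    nestedBracketRight br u v w = br u (br v w) :=
  rfl

@[simp]
lemma nestedBracketLeft_apply (br : g →ₗ[𝕜] g →ₗ[𝕜] g) (u v w : g) :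
    nestedBracketLeft br u v w = br (br u v) w :=
  rfl

variable (br : g →ₗ[𝕜] g →ₗ[𝕜] g)

lemma sweedlerOp_compr₂ (f : g →ₗ[𝕜] g) (T : K ⊗[𝕜] K) (u v : g) :
    sweedlerOp 𝕜 K act (br.compr₂ f) T u v = f (sweedlerOp 𝕜 K act br T u v) := by
  induction T using TensorProduct.induction_on with
  | zero => simp
  | tmul k l => simp
  | add S T hS hT => simp only [map_add, LinearMap.add_apply, hS, hT]

lemma sweedlerOp₃_nestedBracketRight_tmul (x : K) (s : K ⊗[𝕜] K) (u v w : g) :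
    sweedlerOp₃ act (nestedBracketRight br) (x ⊗ₜ s) u v w
      = br (act x u) (sweedlerOp 𝕜 K act br s v w) := by
  rw [sweedlerOp₃_tmul_apply, ← sweedlerOp_compr₂]
  rfl

lemma sweedlerOp₃_nestedBracketLeft_ins12_mul_ins23 (s : K ⊗[𝕜] K) (z : K) (u v w : g) :
    sweedlerOp₃ act (nestedBracketLeft br) (ins12 𝕜 K s * ins23 𝕜 K ((1 : K) ⊗ₜ z)) u v w
      = br (sweedlerOp 𝕜 K act br s u v) (act z w) := by
  induction s using TensorProduct.induction_on with
  | zero => simp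
  | tmul k l => simp [Algebra.TensorProduct.tmul_mul_tmul]
  | add S T hS hT => simp only [map_add, add_mul, LinearMap.add_apply, hS, hT]

end SweedlerOperators

section BraidedBracket

variable {𝕜 K} {act : K →ₗ[𝕜] g →ₗ[𝕜] g} {br : g →ₗ[𝕜] g →ₗ[𝕜] g}

lemma sweedlerOp_mul (hmul : ∀ k l : K, act (k * l) = (act k).comp (act l))
    (μ : g →ₗ[𝕜] g →ₗ[𝕜] g) (S T : K ⊗[𝕜] K) (u v : g) :
    sweedlerOp 𝕜 K act μ (S * T) u v = sweedlerOp 𝕜 K act (sweedlerOp 𝕜 K act μ S) T u v := by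
  induction T using TensorProduct.induction_on with
  | zero => simp
  | add T T' hT hT' => simp only [mul_add, map_add, LinearMap.add_apply, hT, hT']
  | tmul k l =>
    induction S using TensorProduct.induction_on with
    | zero => simp
    | add S S' hS hS' =>
      simp only [add_mul, map_add, sweedlerOp_add_left, LinearMap.add_apply, hS, hS']
    | tmul a b => simp [Algebra.TensorProduct.tmul_mul_tmul, hmul]

lemma sweedlerOp₃_mul_ins12_tmul (hmul : ∀ k l : K, act (k * l) = (act k).comp (act l))
    (ν : g →ₗ[𝕜] g →ₗ[𝕜] g →ₗ[𝕜] g) (T : K ⊗[𝕜] (K ⊗[𝕜] K)) (a b : K) (u v w : g) :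
    sweedlerOp₃ act ν (T * ins12 𝕜 K (a ⊗ₜ b)) u v w
      = sweedlerOp₃ act ν T (act a u) (act b v) w := by
  induction T using TensorProduct.induction_on with
  | zero => simp
  | add T T' hT hT' => simp only [add_mul, map_add, LinearMap.add_apply, hT, hT']
  | tmul x s =>
    induction s using TensorProduct.induction_on with
    | zero => simp
    | add s s' hs hs' =>
      simp only [TensorProduct.tmul_add, add_mul, map_add, LinearMap.add_apply, hs, hs']
    | tmul y z => simp [Algebra.TensorProduct.tmul_mul_tmul, hmul]

lemma act_sweedlerOp (hmul : ∀ k l : K, act (k * l) = (act k).comp (act l))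
    (hequiv : ∀ (k : K) (u v : g), act k (br u v) = sweedlerOp 𝕜 K act br (Coalgebra.comul k) u v)
    (k : K) (T : K ⊗[𝕜] K) (u v : g) :
    act k (sweedlerOp 𝕜 K act br T u v) = sweedlerOp 𝕜 K act br (Coalgebra.comul k * T) u v := by
  induction T using TensorProduct.induction_on with
  | zero => simp
  | tmul a b => rw [sweedlerOp_tmul, hequiv, sweedlerOp_mul hmul, sweedlerOp_tmul]
  | add S T hS hT => simp only [map_add, mul_add, LinearMap.add_apply, hS, hT]

lemma sweedlerOp_eq_neg_sweedlerOp_comm (hmul : ∀ k l : K, act (k * l) = (act k).comp (act l))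
    {R : K ⊗[𝕜] K}
    (hanti : ∀ u v : g, br u v = - sweedlerOp 𝕜 K act br (TensorProduct.comm 𝕜 K K R) v u)
    (T : K ⊗[𝕜] K) (u v : g) :
    sweedlerOp 𝕜 K act br T u v
      = - sweedlerOp 𝕜 K act br (TensorProduct.comm 𝕜 K K (R * T)) v u := by
  induction T using TensorProduct.induction_on with
  | zero => simp
  | tmul a b =>
    rw [sweedlerOp_tmul, hanti, tensorComm_mul, TensorProduct.comm_tmul, sweedlerOp_mul hmul,
      sweedlerOp_tmul]
  | add S T hS hT => simp only [map_add, mul_add, LinearMap.add_apply, hS, hT, neg_add]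

lemma sweedlerOp_sweedlerOp_right (hmul : ∀ k l : K, act (k * l) = (act k).comp (act l))
    (hequiv : ∀ (k : K) (u v : g), act k (br u v) = sweedlerOp 𝕜 K act br (Coalgebra.comul k) u v)
    (T S : K ⊗[𝕜] K) (u v w : g) :
    sweedlerOp 𝕜 K act br T u (sweedlerOp 𝕜 K act br S v w)
      = sweedlerOp₃ act (nestedBracketRight br) (comul23 𝕜 K T * ins23 𝕜 K S) u v w := by
  induction T using TensorProduct.induction_on with
  | zero => simp
  | tmul x y =>
    rw [comul23_tmul, ins23_apply, Algebra.TensorProduct.tmul_mul_tmul, mul_one,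
      sweedlerOp₃_nestedBracketRight_tmul, sweedlerOp_tmul, act_sweedlerOp hmul hequiv]
  | add T T' hT hT' => simp only [map_add, add_mul, LinearMap.add_apply, hT, hT']

lemma sweedlerOp_sweedlerOp_left (hmul : ∀ k l : K, act (k * l) = (act k).comp (act l))
    (hequiv : ∀ (k : K) (u v : g), act k (br u v) = sweedlerOp 𝕜 K act br (Coalgebra.comul k) u v)
    (T S : K ⊗[𝕜] K) (u v w : g) :
    sweedlerOp 𝕜 K act br T (sweedlerOp 𝕜 K act br S u v) w
      = sweedlerOp₃ act (nestedBracketLeft br) (comul12 𝕜 K T * ins12 𝕜 K S) u v w := by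
  induction T using TensorProduct.induction_on with
  | zero => simp
  | tmul x y =>
    rw [comul12_tmul, mul_assoc, (commute_ins23_one_tmul_ins12 y S).eq, ← mul_assoc,
      ← map_mul, sweedlerOp₃_nestedBracketLeft_ins12_mul_ins23, sweedlerOp_tmul,
      act_sweedlerOp hmul hequiv]
  | add T T' hT hT' => simp only [map_add, add_mul, LinearMap.add_apply, hT, hT']

lemma sweedlerOp_compl₂_flip (hmul : ∀ k l : K, act (k * l) = (act k).comp (act l))
    (hequiv : ∀ (k : K) (u v : g), act k (br u v) = sweedlerOp 𝕜 K act br (Coalgebra.comul k) u v)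
    (S Q : K ⊗[𝕜] K) (u v w : g) :
    sweedlerOp 𝕜 K act
        ((sweedlerOp 𝕜 K act br S).compl₂ ((sweedlerOp 𝕜 K act br S).flip w)) Q v u
      = sweedlerOp₃ act (nestedBracketRight br)
          (comul23 𝕜 K S * ins23 𝕜 K S * ins12 𝕜 K Q) v u w := by
  induction Q using TensorProduct.induction_on with
  | zero => simp
  | tmul a b =>
    rw [sweedlerOp₃_mul_ins12_tmul hmul, ← sweedlerOp_sweedlerOp_right hmul hequiv]
    simp
  | add Q Q' hQ hQ' => simp only [map_add, mul_add, LinearMap.add_apply, hQ, hQ']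

lemma sweedlerOp₃_nestedBracketRight (hmul : ∀ k l : K, act (k * l) = (act k).comp (act l))
    {R : K ⊗[𝕜] K}
    (hjac : ∀ u v w : g, br u (br v w) = br (br u v) w
      + sweedlerOp 𝕜 K act (br.compl₂ (br.flip w)) (TensorProduct.comm 𝕜 K K R) v u)
    (T : K ⊗[𝕜] (K ⊗[𝕜] K)) (u v w : g) :
    sweedlerOp₃ act (nestedBracketRight br) T u v w
      = sweedlerOp₃ act (nestedBracketLeft br) T u v w
        + sweedlerOp₃ act (nestedBracketRight br)
            (ins12 𝕜 K (TensorProduct.comm 𝕜 K K R) * Algebra.TensorProduct.leftComm 𝕜 K K K T)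
            v u w := by
  induction T using TensorProduct.induction_on with
  | zero => simp
  | add T T' hT hT' =>
    simp only [map_add, mul_add, LinearMap.add_apply, hT, hT']
    abel
  | tmul x s =>
    induction s using TensorProduct.induction_on with
    | zero => simp
    | add s s' hs hs' =>
      simp only [TensorProduct.tmul_add, map_add, mul_add, LinearMap.add_apply, hs, hs']
      abel
    | tmul y z =>
      have hcorr : ∀ Q : K ⊗[𝕜] K,
          sweedlerOp 𝕜 K act (br.compl₂ (br.flip (act z w))) Q (act y v) (act x u)
            = sweedlerOp₃ act (nestedBracketRight br) (ins12 𝕜 K Q * (y ⊗ₜ (x ⊗ₜ z))) v u w := by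
        intro Q
        induction Q using TensorProduct.induction_on with
        | zero => simp
        | tmul a b => simp [Algebra.TensorProduct.tmul_mul_tmul, hmul]
        | add Q Q' hQ hQ' => simp only [map_add, add_mul, LinearMap.add_apply, hQ, hQ']
      rw [sweedlerOp₃_tmul, nestedBracketRight_apply, hjac, hcorr,
        Algebra.TensorProduct.leftComm_tmul]
      simp

end BraidedBracket

theorem twisted_braided_lie_algebra
    (R Ri : K ⊗[𝕜] K) (hQT : QuasiTri 𝕜 K R Ri)
    (F Fi : K ⊗[𝕜] K) (hF : IsTwist 𝕜 K F Fi)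
    (act : K →ₗ[𝕜] g →ₗ[𝕜] g) (hrep : IsRep 𝕜 K act)
    (br : g →ₗ[𝕜] g →ₗ[𝕜] g) (hbr : IsBraidedLie 𝕜 K act R br) :
    (∀ (k : K) (u v : g),
      act k (sweedlerOp 𝕜 K act br Fi u v)
        = sweedlerOp 𝕜 K act (sweedlerOp 𝕜 K act br Fi)
            (twistComul 𝕜 K F Fi k) u v)
    ∧ (∀ u v : g,
      sweedlerOp 𝕜 K act br Fi u v
        = - sweedlerOp 𝕜 K act (sweedlerOp 𝕜 K act br Fi)
              ((TensorProduct.comm 𝕜 K K) (twistR 𝕜 K F Fi R)) v u)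
    ∧ (∀ u v w : g,
      sweedlerOp 𝕜 K act br Fi u (sweedlerOp 𝕜 K act br Fi v w)
        = sweedlerOp 𝕜 K act br Fi (sweedlerOp 𝕜 K act br Fi u v) w
          + sweedlerOp 𝕜 K act
              ((sweedlerOp 𝕜 K act br Fi).compl₂
                ((sweedlerOp 𝕜 K act br Fi).flip w))
              ((TensorProduct.comm 𝕜 K K) (twistR 𝕜 K F Fi R)) v u) := by
  obtain ⟨hequiv, hanti, hjac⟩ := hbr
  have hcocycle := hF.comul12_inv_mul_ins12_inv
  refine ⟨fun k u v => ?_, fun u v => ?_, fun u v w => ?_⟩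
  · rw [act_sweedlerOp hrep.1 hequiv, ← sweedlerOp_mul hrep.1, inv_mul_twistComul hF.inv_mul]
  · rw [sweedlerOp_eq_neg_sweedlerOp_comm hrep.1 hanti, ← sweedlerOp_mul hrep.1,
      inv_mul_comm_twistR hF.inv_mul]
  · rw [sweedlerOp_sweedlerOp_right hrep.1 hequiv, sweedlerOp₃_nestedBracketRight hrep.1 hjac,
      ← hcocycle, ins12_comm_mul_leftComm_comul12_inv_mul_ins12_inv hQT.quasi hF.inv_mul,
      ← sweedlerOp_sweedlerOp_left hrep.1 hequiv, hcocycle,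
      ← sweedlerOp_compl₂_flip hrep.1 hequiv]
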